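/- Assume the standing hypotheses with $C_{\phi,w}$ densely defined, $\alpha\in(0,1]$, $w_\alpha$ as above, and $\mathsf{h}_{\phi,w_\alpha}<\infty$ a.e. $[\mu]$. Then for every measurable $f\colon X\to[0,\infty]$, $\mathsf{E}_{\phi,w_\alpha}(f)\cdot\mathsf{E}_{\phi,w}(\mathsf{h}_{\phi,w}^\alpha) = \mathsf{E}_{\phi,w}(f\,\mathsf{h}_{\phi,w}^\alpha)$ a.e. $[\mu_w]$. -/

import Mathlib

open MeasureTheory ENNReal NNReal Filter Topology

variable {X : Type*} [MeasurableSpace X]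

/-- The measure `μ_w` with density `|w|²` with respect to `μ`. -/
noncomputable def wcMeasure (μ : Measure X) (w : X → ℂ) : Measure X :=
  μ.withDensity fun x => (‖w x‖₊ : ℝ≥0∞) ^ 2

/-- The Radon–Nikodym derivative `h_{φ,w} = d(μ_w ∘ φ⁻¹)/dμ`. -/
noncomputable def wcDeriv (μ : Measure X) (w : X → ℂ) (φ : X → X) : X → ℝ≥0∞ :=
  ((wcMeasure μ w).map φ).rnDeriv μ

/-- The modified weight `w_α = w · (h_{φ,w}/(h_{φ,w}∘φ))^{α/2}` (interpreted a.e.). -/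
noncomputable def wcAlpha (μ : Measure X) (w : X → ℂ) (φ : X → X) (α : ℝ) : X → ℂ :=
  fun x => w x * (((wcDeriv μ w φ x / wcDeriv μ w φ (φ x)) ^ (α / 2)).toReal : ℂ)

/-- `E` is (a version of) the conditional expectation of the nonnegative function `f`
with respect to the σ-algebra `φ⁻¹(𝒜)` and the measure `ν`. -/
def IsCondExp (φ : X → X) (ν : Measure X) (f E : X → ℝ≥0∞) : Prop :=
  Measurable[MeasurableSpace.comap φ inferInstance] E ∧
    ∀ s : Set X, MeasurableSet s → ∫⁻ x in φ ⁻¹' s, E x ∂ν = ∫⁻ x in φ ⁻¹' s, f x ∂ν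

/-- `g = E ∘ φ⁻¹`: the measurable function with `g ∘ φ = E` a.e. `[ν]`,
vanishing a.e. `[μ]` on the set where `h = 0`. -/
def IsQuot (φ : X → X) (μ ν : Measure X) (h : X → ℝ≥0∞) (E g : X → ℝ≥0∞) : Prop :=
  Measurable g ∧ (∀ᵐ x ∂ν, g (φ x) = E x) ∧ (∀ᵐ x ∂μ, h x = 0 → g x = 0)

/-- `E` is (a version of) the conditional expectation of the complex function `f`
with respect to the σ-algebra `φ⁻¹(𝒜)` and the measure `ν`. -/
def IsCondExpC (φ : X → X) (ν : Measure X) (f E : X → ℂ) : Prop :=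
  Measurable[MeasurableSpace.comap φ inferInstance] E ∧
    ∀ s : Set X, MeasurableSet s → ν (φ ⁻¹' s) < ⊤ →
      ∫ x in φ ⁻¹' s, E x ∂ν = ∫ x in φ ⁻¹' s, f x ∂ν

/-- `f_w = χ_{{w ≠ 0}} f / w`. -/
noncomputable def fw (w f : X → ℂ) : X → ℂ := fun x => if w x = 0 then 0 else f x / w x

/-!
Write `h = h_{φ,w}`. Since `|w_α|² = |w|² (h / h∘φ)^α` and `h∘φ` is `μ_w`-a.e. in `(0, ∞)`, the
measures `(h∘φ)^α μ_{w_α}` and `h^α μ_w` coincide. As `φ⁻¹(𝒜)`-measurable factors pull out of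
conditional expectations, for every measurable `s`
`∫_{φ⁻¹s} E_{φ,w_α}(f) E_{φ,w}(h^α) dμ_w = ∫_{φ⁻¹s} E_{φ,w_α}(f) h^α dμ_w
  = ∫_{φ⁻¹s} (h∘φ)^α E_{φ,w_α}(f) dμ_{w_α} = ∫_{φ⁻¹s} (h∘φ)^α f dμ_{w_α} = ∫_{φ⁻¹s} f h^α dμ_w`.
Both sides are `φ⁻¹(𝒜)`-measurable, and `μ_w` is σ-finite on `φ⁻¹(𝒜)` because `μ_w ∘ φ⁻¹ = h μ`
with `h < ∞`; so these integrals determine them `μ_w`-a.e.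
-/

section Pullback

variable {Y : Type*} [MeasurableSpace Y] {φ : X → Y} {ν : Measure X}

lemma setLIntegral_preimage_comp_mul (hφ : Measurable φ) {F : X → ℝ≥0∞} (hF : Measurable F)
    {G : Y → ℝ≥0∞} (hG : Measurable G) {s : Set Y} (hs : MeasurableSet s) :
    ∫⁻ x in φ ⁻¹' s, G (φ x) * F x ∂ν = ∫⁻ y in s, G y ∂(ν.withDensity F).map φ := by
  rw [setLIntegral_map hs hG hφ,
    setLIntegral_withDensity_eq_setLIntegral_mul _ hF (g := fun x => G (φ x)) (hG.comp hφ)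
      (hφ hs)]
  simp only [Pi.mul_apply, mul_comm]

lemma sigmaFinite_trim_comap (hφ : Measurable φ) [hσ : SigmaFinite (ν.map φ)] :
    SigmaFinite (ν.trim hφ.comap_le) := by
  rw [← map_trim_comap hφ] at hσ
  exact SigmaFinite.of_map _ (Measurable.of_comap_le le_rfl).aemeasurable hσ

lemma ae_eq_of_forall_setLIntegral_preimage_eq (hφ : Measurable φ) [SigmaFinite (ν.map φ)]
    {E E' : X → ℝ≥0∞} (hE : Measurable[MeasurableSpace.comap φ inferInstance] E)
    (hE' : Measurable[MeasurableSpace.comap φ inferInstance] E')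
    (h : ∀ s, MeasurableSet s → ∫⁻ x in φ ⁻¹' s, E x ∂ν = ∫⁻ x in φ ⁻¹' s, E' x ∂ν) :
    E =ᵐ[ν] E' := by
  have := sigmaFinite_trim_comap (ν := ν) hφ
  refine ae_eq_of_ae_eq_trim (ae_eq_of_forall_setLIntegral_eq_of_sigmaFinite hE hE' ?_)
  rintro _ ⟨s, hs, rfl⟩ -
  rw [restrict_trim hφ.comap_le _ ⟨s, hs, rfl⟩, lintegral_trim _ hE, lintegral_trim _ hE']
  exact h s hs

end Pullback

namespace IsCondExp

variable {φ : X → X} {ν : Measure X} {f E : X → ℝ≥0∞}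

lemma map_withDensity_eq (hφ : Measurable φ) (hE : IsCondExp φ ν f E) :
    (ν.withDensity E).map φ = (ν.withDensity f).map φ := by
  ext s hs
  rw [Measure.map_apply hφ hs, Measure.map_apply hφ hs, withDensity_apply _ (hφ hs),
    withDensity_apply _ (hφ hs), hE.2 s hs]

lemma setLIntegral_mul (hφ : Measurable φ) (hf : Measurable f) (hE : IsCondExp φ ν f E)
    {g : X → ℝ≥0∞} (hg : Measurable[MeasurableSpace.comap φ inferInstance] g)
    {s : Set X} (hs : MeasurableSet s) :
    ∫⁻ x in φ ⁻¹' s, g x * E x ∂ν = ∫⁻ x in φ ⁻¹' s, g x * f x ∂ν := by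
  obtain ⟨G, hG, rfl⟩ := hg.exists_eq_measurable_comp
  simp only [Function.comp_apply]
  rw [setLIntegral_preimage_comp_mul hφ (hE.1.mono hφ.comap_le le_rfl) hG hs,
    setLIntegral_preimage_comp_mul hφ hf hG hs, hE.map_withDensity_eq hφ]

end IsCondExp

lemma ENNReal.coe_toNNReal_div_rpow_half_sq_mul {a b : ℝ≥0∞} (ha : a ≠ ∞) (hb₀ : b ≠ 0)
    (hb : b ≠ ∞) {α : ℝ} (hα : 0 ≤ α) :
    (((a / b) ^ (α / 2)).toNNReal : ℝ≥0∞) ^ 2 * b ^ α = a ^ α := by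
  have hab : (a / b) ^ (α / 2) ≠ ∞ :=
    ENNReal.rpow_ne_top_of_nonneg (by linarith) (ENNReal.div_ne_top ha hb₀)
  have hbα₀ : b ^ α ≠ 0 := (ENNReal.rpow_pos (pos_iff_ne_zero.mpr hb₀) hb).ne'
  rw [ENNReal.coe_toNNReal hab, ← ENNReal.rpow_natCast, ← ENNReal.rpow_mul,
    Nat.cast_ofNat, div_mul_cancel₀ α two_ne_zero, ENNReal.div_rpow_of_nonneg _ _ hα,
    ENNReal.div_mul_cancel hbα₀ (ENNReal.rpow_ne_top_of_nonneg hα hb)]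

section WeightedComposition

variable {μ : Measure X} {w : X → ℂ} {φ : X → X}

instance [SFinite μ] : SFinite (wcMeasure μ w) := by
  unfold wcMeasure
  infer_instance

@[fun_prop]
lemma measurable_wcDeriv : Measurable (wcDeriv μ w φ) := Measure.measurable_rnDeriv _ _

lemma withDensity_wcDeriv [SigmaFinite μ] (habs : (wcMeasure μ w).map φ ≪ μ) :
    μ.withDensity (wcDeriv μ w φ) = (wcMeasure μ w).map φ :=
  Measure.withDensity_rnDeriv_eq _ _ habs

lemma sigmaFinite_map_wcMeasure [SigmaFinite μ] (habs : (wcMeasure μ w).map φ ≪ μ)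
    (hfin : ∀ᵐ x ∂μ, wcDeriv μ w φ x < ⊤) : SigmaFinite ((wcMeasure μ w).map φ) := by
  rw [← withDensity_wcDeriv habs]
  exact SigmaFinite.withDensity_of_ne_top (hfin.mono fun _ hx => hx.ne)

lemma ae_wcDeriv_comp_ne_zero [SigmaFinite μ] (hφ : Measurable φ)
    (habs : (wcMeasure μ w).map φ ≪ μ) : ∀ᵐ x ∂wcMeasure μ w, wcDeriv μ w φ (φ x) ≠ 0 :=
  ae_of_ae_map hφ.aemeasurable ((Measure.rnDeriv_pos habs).mono fun _ hx => hx.ne')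

lemma ae_wcDeriv_comp_ne_top (hφ : Measurable φ) (habs : (wcMeasure μ w).map φ ≪ μ)
    (hfin : ∀ᵐ x ∂μ, wcDeriv μ w φ x < ⊤) : ∀ᵐ x ∂wcMeasure μ w, wcDeriv μ w φ (φ x) ≠ ∞ :=
  ae_of_ae_map hφ.aemeasurable (habs.ae_le (hfin.mono fun _ hx => hx.ne))

lemma wcMeasure_wcAlpha (hw : Measurable w) (hφ : Measurable φ) (α : ℝ) :
    wcMeasure μ (wcAlpha μ w φ α) = (wcMeasure μ w).withDensity fun x =>
      (((wcDeriv μ w φ x / wcDeriv μ w φ (φ x)) ^ (α / 2)).toNNReal : ℝ≥0∞) ^ 2 := by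
  have hk : Measurable fun x =>
      (((wcDeriv μ w φ x / wcDeriv μ w φ (φ x)) ^ (α / 2)).toNNReal : ℝ≥0∞) ^ 2 := by
    fun_prop
  rw [wcMeasure, wcMeasure, ← withDensity_mul _ (by fun_prop) hk]
  congr 1
  funext x
  simp only [wcAlpha, Pi.mul_apply, nnnorm_mul, ENNReal.coe_mul, mul_pow, Complex.nnnorm_real]
  rw [← ENNReal.coe_toNNReal_eq_toReal, NNReal.nnnorm_eq]

lemma withDensity_wcMeasure_wcAlpha [SigmaFinite μ] (hw : Measurable w) (hφ : Measurable φ)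
    (habs : (wcMeasure μ w).map φ ≪ μ) (hfin : ∀ᵐ x ∂μ, wcDeriv μ w φ x < ⊤)
    {α : ℝ} (hα : 0 ≤ α) :
    (wcMeasure μ (wcAlpha μ w φ α)).withDensity (fun x => wcDeriv μ w φ (φ x) ^ α) =
      (wcMeasure μ w).withDensity fun x => wcDeriv μ w φ x ^ α := by
  have hk : Measurable fun x =>
      (((wcDeriv μ w φ x / wcDeriv μ w φ (φ x)) ^ (α / 2)).toNNReal : ℝ≥0∞) ^ 2 := by
    fun_prop
  rw [wcMeasure_wcAlpha hw hφ, ← withDensity_mul _ hk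
    (g := fun x => wcDeriv μ w φ (φ x) ^ α) (by fun_prop)]
  refine withDensity_congr_ae ?_
  filter_upwards [withDensity_absolutelyContinuous μ _ (hfin.mono fun _ hx => hx.ne),
    ae_wcDeriv_comp_ne_zero hφ habs, ae_wcDeriv_comp_ne_top hφ habs hfin] with x h₁ h₂ h₃
  exact ENNReal.coe_toNNReal_div_rpow_half_sq_mul h₁ h₂ h₃ hα

lemma setLIntegral_wcMeasure_wcAlpha [SigmaFinite μ] (hw : Measurable w) (hφ : Measurable φ)
    (habs : (wcMeasure μ w).map φ ≪ μ) (hfin : ∀ᵐ x ∂μ, wcDeriv μ w φ x < ⊤)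
    {α : ℝ} (hα : 0 ≤ α) {F : X → ℝ≥0∞} (hF : Measurable F) {t : Set X} (ht : MeasurableSet t) :
    ∫⁻ x in t, wcDeriv μ w φ (φ x) ^ α * F x ∂wcMeasure μ (wcAlpha μ w φ α) =
      ∫⁻ x in t, F x * wcDeriv μ w φ x ^ α ∂wcMeasure μ w := by
  have h₁ := setLIntegral_withDensity_eq_setLIntegral_mul (wcMeasure μ (wcAlpha μ w φ α))
    (f := fun x => wcDeriv μ w φ (φ x) ^ α) (by fun_prop) hF ht
  have h₂ := setLIntegral_withDensity_eq_setLIntegral_mul (wcMeasure μ w)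
    (f := fun x => wcDeriv μ w φ x ^ α) (by fun_prop) hF ht
  rw [withDensity_wcMeasure_wcAlpha hw hφ habs hfin hα, h₂] at h₁
  simpa only [Pi.mul_apply, mul_comm] using h₁.symm

end WeightedComposition

theorem aluthge_wco_condexp_product_general
    (μ : Measure X) [SigmaFinite μ] (w : X → ℂ) (φ : X → X)
    (hw : Measurable w) (hφ : Measurable φ)
    (habs : (wcMeasure μ w).map φ ≪ μ)
    (hfin : ∀ᵐ x ∂μ, wcDeriv μ w φ x < ⊤)
    (α : ℝ) (hα : α ∈ Set.Ioc (0 : ℝ) 1)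
    (f : X → ℝ≥0∞) (hf : Measurable f)
    (E₁ E₂ E₃ : X → ℝ≥0∞)
    (hE₁ : IsCondExp φ (wcMeasure μ w) (fun x => wcDeriv μ w φ x ^ α) E₁)
    (hE₂ : IsCondExp φ (wcMeasure μ w) (fun x => f x * wcDeriv μ w φ x ^ α) E₂)
    (hE₃ : IsCondExp φ (wcMeasure μ (wcAlpha μ w φ α)) f E₃) :
    ∀ᵐ x ∂(wcMeasure μ w), E₃ x * E₁ x = E₂ x := by
  have := sigmaFinite_map_wcMeasure habs hfin
  refine ae_eq_of_forall_setLIntegral_preimage_eq hφ (hE₃.1.mul hE₁.1) hE₂.1 fun s hs => ?_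
  calc ∫⁻ x in φ ⁻¹' s, E₃ x * E₁ x ∂wcMeasure μ w
      = ∫⁻ x in φ ⁻¹' s, E₃ x * wcDeriv μ w φ x ^ α ∂wcMeasure μ w :=
        hE₁.setLIntegral_mul hφ (by fun_prop) hE₃.1 hs
    _ = ∫⁻ x in φ ⁻¹' s, wcDeriv μ w φ (φ x) ^ α * E₃ x ∂wcMeasure μ (wcAlpha μ w φ α) :=
        (setLIntegral_wcMeasure_wcAlpha hw hφ habs hfin hα.1.le
          (hE₃.1.mono hφ.comap_le le_rfl) (hφ hs)).symm
    _ = ∫⁻ x in φ ⁻¹' s, wcDeriv μ w φ (φ x) ^ α * f x ∂wcMeasure μ (wcAlpha μ w φ α) :=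
        hE₃.setLIntegral_mul hφ hf
          ((measurable_wcDeriv.pow_const α).comp (comap_measurable φ)) hs
    _ = ∫⁻ x in φ ⁻¹' s, f x * wcDeriv μ w φ x ^ α ∂wcMeasure μ w :=
        setLIntegral_wcMeasure_wcAlpha hw hφ habs hfin hα.1.le hf (hφ hs)
    _ = ∫⁻ x in φ ⁻¹' s, E₂ x ∂wcMeasure μ w := (hE₂.2 s hs).symm

/-- If `h_{φ,w_α} < ∞` a.e. `[μ]`, then for every measurable
`f : X → [0,∞]`, `E_{φ,w_α}(f) · E_{φ,w}(h_{φ,w}^α) = E_{φ,w}(f · h_{φ,w}^α)` a.e. `[μ_w]`. -/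
theorem aluthge_wco_condexp_product
    (μ : Measure X) [SigmaFinite μ] (w : X → ℂ) (φ : X → X)
    (hw : Measurable w) (hφ : Measurable φ)
    (habs : (wcMeasure μ w).map φ ≪ μ)
    (hfin : ∀ᵐ x ∂μ, wcDeriv μ w φ x < ⊤)
    (α : ℝ) (hα : α ∈ Set.Ioc (0 : ℝ) 1)
    (hfinα : ∀ᵐ x ∂μ, wcDeriv μ (wcAlpha μ w φ α) φ x < ⊤)
    (f : X → ℝ≥0∞) (hf : Measurable f)
    (E₁ E₂ E₃ : X → ℝ≥0∞)
    (hE₁ : IsCondExp φ (wcMeasure μ w) (fun x => wcDeriv μ w φ x ^ α) E₁)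
    (hE₂ : IsCondExp φ (wcMeasure μ w) (fun x => f x * wcDeriv μ w φ x ^ α) E₂)
    (hE₃ : IsCondExp φ (wcMeasure μ (wcAlpha μ w φ α)) f E₃) :
    ∀ᵐ x ∂(wcMeasure μ w), E₃ x * E₁ x = E₂ x :=
  aluthge_wco_condexp_product_general μ w φ hw hφ habs hfin α hα f hf E₁ E₂ E₃ hE₁ hE₂ hE₃
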